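/- Let p, q ≥ 1 and D ≥ 3 be integers, and let T = B(p,q,D) be the barbell graph with leaves as boundary. Then the Steklov eigenvalues of T are σ_1 = 0, σ_2 = (p+q)/((D−2)pq + p + q), and σ_k = 1 for all 3 ≤ k ≤ p+q. -/

import Mathlib

open scoped BigOperators
open Classical

/-- The Dirichlet energy of a function on a finite graph: `∑_{edges xy} (f x - f y)^2`. -/
noncomputable def dirichletEnergy {V : Type*} [Fintype V] (G : SimpleGraph V) (f : V → ℝ) : ℝ :=
  (∑ x : V, ∑ y : V, if G.Adj x y then (f x - f y) ^ 2 else 0) / 2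

/-- The `k`-th Steklov (Dirichlet-to-Neumann) eigenvalue (1-indexed, in increasing order
with multiplicity) of a finite graph `G` with boundary `B`, via the variational
(Courant–Fischer) characterization. -/
noncomputable def steklovEig {V : Type*} [Fintype V] (G : SimpleGraph V) (B : Finset V)
    (k : ℕ) : ℝ :=
  sInf { t : ℝ | ∃ F : Submodule ℝ (V → ℝ),
    Module.finrank ℝ (F.map (LinearMap.funLeft ℝ ℝ (fun x : {v // v ∈ B} => (x : V)))) = k ∧
    ∀ f ∈ F, dirichletEnergy G f ≤ t * ∑ x ∈ B, (f x) ^ 2 }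

/-- The set of leaves (vertices of degree 1) of a finite graph, as a `Finset`. -/
noncomputable def leavesFinset {V : Type*} [Fintype V] (G : SimpleGraph V) : Finset V :=
  Finset.univ.filter fun v => G.degree v = 1

/-- `σ_{k,max}(b,n)`: the maximum of the `k`-th Steklov eigenvalue over all trees with
`b` leaves (as boundary) and `n` vertices. -/
noncomputable def sigmaMax (k b n : ℕ) : ℝ :=
  sSup { s : ℝ | ∃ G : SimpleGraph (Fin n), G.IsTree ∧ (leavesFinset G).card = b ∧
    s = steklovEig G (leavesFinset G) k }

/-- `σ̃_{2,max}(D,n)`: the maximum of the first nontrivial Steklov eigenvalue over all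
trees with diameter `D` and `n` vertices. -/
noncomputable def sigmaTildeMax (D n : ℕ) : ℝ :=
  sSup { s : ℝ | ∃ G : SimpleGraph (Fin n), G.IsTree ∧ G.diam = D ∧
    s = steklovEig G (leavesFinset G) 2 }

/-- The barbell graph `B(p,q,D)`: a path with `D-1` vertices (`Sum.inr (Sum.inr w)`),
with `p` pendant vertices attached at the endpoint `w = 0` and `q` pendant vertices
attached at the endpoint `w = D-2`. -/
def barbell (p q D : ℕ) : SimpleGraph (Fin p ⊕ Fin q ⊕ Fin (D - 1)) :=
  SimpleGraph.fromRel fun x y =>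
    match x, y with
    | Sum.inl _, Sum.inr (Sum.inr w) => (w : ℕ) = 0
    | Sum.inr (Sum.inl _), Sum.inr (Sum.inr w) => (w : ℕ) = D - 2
    | Sum.inr (Sum.inr w), Sum.inr (Sum.inr w') => (w' : ℕ) = (w : ℕ) + 1
    | _, _ => False

/-!
Everything runs through the min-max characterisation. A `k`-dimensional space of test functions
with Rayleigh quotient at most `t` gives `σ_k ≤ t`; conversely, if the Rayleigh quotient is at
least `t` on all functions satisfying `k - 1` linear constraints on their boundary values, then
`t ≤ σ_k`, because such constraints meet every `k`-dimensional space of boundary functions.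

On `B(p,q,D)` constants give `σ₁ = 0`. Functions supported on `k` leaves have quotient `1`, while
a function whose boundary values sum to zero on each of the two stars has quotient at least `1`,
so `σ_k = 1` for `k ≥ 3`. For `σ₂` the test function is the harmonic extension of the boundary
data `-q` on one star and `p` on the other; the matching lower bound under the single constraint
`∑ f = 0` comes from Cauchy–Schwarz on both stars and along the path, combined by an explicit
sum-of-squares identity.
-/

lemma Fin.sum_ite_val_eq {M : Type*} [AddCommMonoid M] {n : ℕ} (m : ℕ) (g : Fin n → M) :
    ∑ i : Fin n, (if (i : ℕ) = m then g i else 0) = if h : m < n then g ⟨m, h⟩ else 0 := by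
  split_ifs with h
  · rw [Finset.sum_eq_single ⟨m, h⟩ (fun i _ hi => if_neg fun him => hi (Fin.ext him))
      (by simp), if_pos rfl]
  · exact Finset.sum_eq_zero fun i _ => if_neg fun (him : (i : ℕ) = m) => h (him ▸ i.2)

lemma Finset.sum_range_ite_succ_lt {M : Type*} [AddCommMonoid M] (n : ℕ) (g : ℕ → M) :
    ∑ i ∈ Finset.range n, (if i + 1 < n then g i else 0) = ∑ i ∈ Finset.range (n - 1), g i := by
  rw [← Finset.sum_filter]
  congr 1
  ext i
  simp only [Finset.mem_filter, Finset.mem_range]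
  omega

lemma Finset.sum_sub_sq_eq {ι : Type*} (s : Finset ι) (g : ι → ℝ) (c : ℝ) :
    ∑ i ∈ s, (g i - c) ^ 2 = ∑ i ∈ s, g i ^ 2 - 2 * c * ∑ i ∈ s, g i + s.card * c ^ 2 := by
  simp only [sub_sq, Finset.sum_add_distrib, Finset.sum_sub_distrib, Finset.mul_sum,
    Finset.sum_const, nsmul_eq_mul]
  congr 2
  exact Finset.sum_congr rfl fun i _ => by ring

abbrev restrictBoundary {V : Type*} (B : Finset V) : (V → ℝ) →ₗ[ℝ] (B → ℝ) :=
  LinearMap.funLeft ℝ ℝ (fun x : {v // v ∈ B} => (x : V))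

lemma sum_sq_pos_of_restrictBoundary_ne_zero {V : Type*} {B : Finset V} {f : V → ℝ}
    (hf : restrictBoundary B f ≠ 0) : 0 < ∑ x ∈ B, f x ^ 2 := by
  obtain ⟨b, hb⟩ := Function.ne_iff.1 hf
  exact Finset.sum_pos' (fun x _ => sq_nonneg _) ⟨b, b.2, sq_pos_of_ne_zero hb⟩

section Steklov

variable {V : Type*} [Fintype V] (G : SimpleGraph V) (B : Finset V)

lemma dirichletEnergy_nonneg (f : V → ℝ) : 0 ≤ dirichletEnergy G f := by
  unfold dirichletEnergy
  refine div_nonneg (Finset.sum_nonneg fun x _ => Finset.sum_nonneg fun y _ => ?_) zero_le_two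
  split_ifs <;> positivity

lemma dirichletEnergy_const_add_mul (s t : ℝ) (f : V → ℝ) :
    dirichletEnergy G (fun x => s + t * f x) = t ^ 2 * dirichletEnergy G f := by
  simp only [dirichletEnergy, Finset.mul_sum, mul_div_assoc']
  congr 1
  refine Finset.sum_congr rfl fun x _ => Finset.sum_congr rfl fun y _ => ?_
  split_ifs <;> ring

/-- `steklovEig G B k` is by definition `sInf (steklovBounds G B k)`. -/
def steklovBounds (k : ℕ) : Set ℝ :=
  {t | ∃ F : Submodule ℝ (V → ℝ), Module.finrank ℝ (F.map (restrictBoundary B)) = k ∧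
    ∀ f ∈ F, dirichletEnergy G f ≤ t * ∑ x ∈ B, f x ^ 2}

variable {G B}

lemma mem_steklovBounds_of_linearIndependent {ι : Type*} [Fintype ι] (v : ι → V → ℝ)
    (hv : LinearIndependent ℝ (restrictBoundary B ∘ v)) {t : ℝ}
    (h : ∀ c : ι → ℝ, dirichletEnergy G (∑ i, c i • v i) ≤ t * ∑ x ∈ B, (∑ i, c i • v i) x ^ 2) :
    t ∈ steklovBounds G B (Fintype.card ι) := by
  refine ⟨Submodule.span ℝ (Set.range v), ?_, fun f hf => ?_⟩
  · rw [Submodule.map_span, ← Set.range_comp, finrank_span_eq_card hv]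
  · obtain ⟨c, rfl⟩ := (Submodule.mem_span_range_iff_exists_fun ℝ).1 hf
    exact h c

lemma le_of_mem_steklovBounds {ι : Type*} [Fintype ι] {k : ℕ} (hk : Fintype.card ι < k)
    (w : ι → V → ℝ) {c : ℝ}
    (hc : ∀ f : V → ℝ, (∀ i, ∑ x ∈ B, w i x * f x = 0) →
      c * ∑ x ∈ B, f x ^ 2 ≤ dirichletEnergy G f)
    {t : ℝ} (ht : t ∈ steklovBounds G B k) : c ≤ t := by
  obtain ⟨F, hF, hFt⟩ := ht
  let L : (B → ℝ) →ₗ[ℝ] (ι → ℝ) := Matrix.mulVecLin (fun i (b : B) => w i b)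
  have hker : LinearMap.ker (L ∘ₗ (F.map (restrictBoundary B)).subtype) ≠ ⊥ :=
    LinearMap.ker_ne_bot_of_finrank_lt (by rwa [hF, Module.finrank_fintype_fun_eq_card])
  obtain ⟨⟨g, f, hfF, rfl⟩, hLg, hg0⟩ := Submodule.exists_mem_ne_zero_of_ne_bot hker
  have hf0 : restrictBoundary B f ≠ 0 := fun h => hg0 (Subtype.ext h)
  have hconstr : ∀ i, ∑ x ∈ B, w i x * f x = 0 := fun i => by
    rw [← Finset.sum_coe_sort B]
    exact congrFun hLg i
  exact le_of_mul_le_mul_right ((hc f hconstr).trans (hFt f hfF))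
    (sum_sq_pos_of_restrictBoundary_ne_zero hf0)

lemma steklovEig_eq_of_mem_steklovBounds {ι : Type*} [Fintype ι] {k : ℕ}
    (hk : Fintype.card ι < k) (w : ι → V → ℝ) {c : ℝ}
    (hc : ∀ f : V → ℝ, (∀ i, ∑ x ∈ B, w i x * f x = 0) →
      c * ∑ x ∈ B, f x ^ 2 ≤ dirichletEnergy G f)
    (hmem : c ∈ steklovBounds G B k) : steklovEig G B k = c :=
  IsLeast.csInf_eq ⟨hmem, fun _ ht => le_of_mem_steklovBounds hk w hc ht⟩

theorem steklovEig_one (hB : B.Nonempty) : steklovEig G B 1 = 0 := by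
  refine steklovEig_eq_of_mem_steklovBounds (ι := Fin 0) (by simp) Fin.elim0
    (fun f _ => by simpa using dirichletEnergy_nonneg G f) ?_
  obtain ⟨b, hb⟩ := hB
  have hv : LinearIndependent ℝ (restrictBoundary B ∘ fun _ : Fin 1 => fun _ : V => (1 : ℝ)) :=
    linearIndependent_unique_iff.2 (Function.ne_iff.2 ⟨⟨b, hb⟩, one_ne_zero⟩)
  simpa using mem_steklovBounds_of_linearIndependent (G := G) (t := 0) _ hv fun c => by
    have hconst : (∑ i, c i • fun _ : V => (1 : ℝ)) = fun _ => c 0 + 0 * 0 := by ext; simp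
    rw [hconst, dirichletEnergy_const_add_mul]
    simp

lemma mem_steklovBounds_of_subset {S : Finset V} (hSB : S ⊆ B) {t : ℝ}
    (h : ∀ f : V → ℝ, (∀ x ∉ S, f x = 0) → dirichletEnergy G f ≤ t * ∑ x ∈ B, f x ^ 2) :
    t ∈ steklovBounds G B S.card := by
  classical
  let v : S → V → ℝ := fun s => Pi.single (s : V) 1
  have hv : LinearIndependent ℝ (restrictBoundary B ∘ v) := by
    have hinj : Function.Injective fun s : S => (⟨s, hSB s.2⟩ : B) :=
      fun s s' h => Subtype.ext (congrArg Subtype.val h :)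
    convert (Pi.basisFun ℝ B).linearIndependent.comp _ hinj with s
    ext b
    simp [v, Pi.single_apply, Subtype.ext_iff]
  rw [← Fintype.card_coe]
  refine mem_steklovBounds_of_linearIndependent v hv fun c => h _ fun x hx => ?_
  simp only [Finset.sum_apply, Pi.smul_apply, smul_eq_mul, v]
  exact Finset.sum_eq_zero fun s _ => by
    rw [Pi.single_eq_of_ne (fun h : x = s => hx (h ▸ s.2)), mul_zero]

lemma mem_steklovBounds_two {φ : V → ℝ} {σ : ℝ} (hσ : 0 ≤ σ)
    (hφ0 : restrictBoundary B φ ≠ 0) (hφB : ∑ x ∈ B, φ x = 0)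
    (hφ : dirichletEnergy G φ = σ * ∑ x ∈ B, φ x ^ 2) :
    σ ∈ steklovBounds G B 2 := by
  have hcard : (0 : ℝ) < B.card := by
    obtain ⟨b, -⟩ := Function.ne_iff.1 hφ0
    exact_mod_cast Finset.card_pos.2 ⟨b.1, b.2⟩
  have hv : LinearIndependent ℝ (restrictBoundary B ∘ ![fun _ => 1, φ]) := by
    rw [show restrictBoundary B ∘ ![fun _ => 1, φ] = ![fun _ => 1, restrictBoundary B φ] by
      ext i; fin_cases i <;> rfl]
    refine LinearIndependent.pair_iff.2 fun s t hst => ?_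
    have hs : s = 0 := by
      have := congrArg (fun g : B → ℝ => ∑ b, g b) hst
      simp only [Pi.add_apply, Pi.smul_apply, smul_eq_mul, mul_one, Finset.sum_add_distrib,
        ← Finset.mul_sum, Finset.sum_const, Finset.card_univ, Fintype.card_coe, nsmul_eq_mul,
        LinearMap.funLeft_apply, Finset.sum_coe_sort B φ, hφB, Pi.zero_apply,
        mul_zero, add_zero] at this
      exact (mul_eq_zero.1 this).resolve_left hcard.ne'
    subst hs
    refine ⟨rfl, ?_⟩
    simpa [hφ0] using hst
  refine mem_steklovBounds_of_linearIndependent _ hv fun c => ?_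
  have hc : (∑ i, c i • ![fun _ => 1, φ] i) = fun x => c 0 + c 1 * φ x := by
    ext x; simp [Fin.sum_univ_two]
  have hQ : ∑ x ∈ B, (c 0 + c 1 * φ x) ^ 2 = c 0 ^ 2 * B.card + c 1 ^ 2 * ∑ x ∈ B, φ x ^ 2 := by
    have : ∀ x, (c 0 + c 1 * φ x) ^ 2 = c 0 ^ 2 + 2 * c 0 * c 1 * φ x + c 1 ^ 2 * φ x ^ 2 :=
      fun x => by ring
    simp only [this, Finset.sum_add_distrib, ← Finset.mul_sum, hφB, Finset.sum_const, nsmul_eq_mul]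
    ring
  rw [hc, dirichletEnergy_const_add_mul, hφ, hQ]
  nlinarith [mul_nonneg (mul_nonneg hσ (sq_nonneg (c 0))) hcard.le]

lemma dirichletEnergy_fromRel {r : V → V → Prop} (hr : ∀ x y, r x y → ¬ r y x) (f : V → ℝ) :
    dirichletEnergy (SimpleGraph.fromRel r) f =
      ∑ x, ∑ y, if r x y then (f x - f y) ^ 2 else 0 := by
  unfold dirichletEnergy
  rw [div_eq_iff two_ne_zero]
  calc ∑ x, ∑ y, _
      = ∑ x, ∑ y, ((if r x y then (f x - f y) ^ 2 else 0) +
          (if r y x then (f y - f x) ^ 2 else 0)) := by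
        refine Finset.sum_congr rfl fun x _ => Finset.sum_congr rfl fun y _ => ?_
        by_cases hxy : r x y
        · have hne : x ≠ y := fun h => hr x y hxy (h ▸ hxy)
          rw [if_pos ⟨hne, Or.inl hxy⟩, if_pos hxy, if_neg (hr x y hxy), add_zero]
        · by_cases hyx : r y x
          · have hne : x ≠ y := fun h => hr y x hyx (h ▸ hyx)
            rw [if_pos ⟨hne, Or.inr hyx⟩, if_neg hxy, if_pos hyx, zero_add]
            ring
          · rw [if_neg fun h => h.2.elim hxy hyx, if_neg hxy, if_neg hyx, add_zero]
    _ = _ := by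
        simp only [Finset.sum_add_distrib]
        rw [Finset.sum_comm (f := fun x y => if r y x then _ else _)]
        ring

end Steklov

/-- With `A = ∑ aᵢ = -∑ bⱼ`, `Sa = ∑ aᵢ²`, `Sb = ∑ bⱼ²`, the right-hand factor is the energy of a
barbell function with path endpoint values `x, y` and path energy `P`. -/
lemma barbell_energy_inequality {p q d A Sa Sb x y P : ℝ} (hp : 0 < p) (hq : 0 < q) (hd : 0 < d)
    (hA : A ^ 2 ≤ p * Sa) (hB : A ^ 2 ≤ q * Sb) (hP : (x - y) ^ 2 ≤ d * P) :
    (p + q) * (Sa + Sb) ≤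
      (d * p * q + p + q) * (Sa - 2 * x * A + p * x ^ 2 + (Sb + 2 * y * A + q * y ^ 2) + P) := by
  have hN : 0 < d * p * q + p + q := by positivity
  set N := d * p * q + p + q with hN_def
  set E := Sa - 2 * x * A + p * x ^ 2 + (Sb + 2 * y * A + q * y ^ 2) + P with hE_def
  have key : (d * p + 1) * d * (N * E - (p + q) * (Sa + Sb)) =
      N * ((d * p + 1) * x - d * A - y) ^ 2 + d * (d * p * A + N * y) ^ 2
        + (d * p + 1) * d ^ 2 * (q * (p * Sa - A ^ 2) + p * (q * Sb - A ^ 2))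
        + (d * p + 1) * N * (d * P - (x - y) ^ 2) := by
    rw [hN_def, hE_def]
    ring
  have hsos : 0 ≤ (d * p + 1) * d * (N * E - (p + q) * (Sa + Sb)) := by
    rw [key]
    have := sub_nonneg.2 hA
    have := sub_nonneg.2 hB
    have := sub_nonneg.2 hP
    positivity
  linarith [nonneg_of_mul_nonneg_right hsos (by positivity)]

section Barbell

variable {p q D : ℕ}

/-- The `n`-th vertex of the path of `barbell p q D`; `n` is read modulo `D - 1` only to make
this a total function of `n : ℕ`. -/
def barbellPathVertex (hD : 2 ≤ D) (n : ℕ) : Fin p ⊕ Fin q ⊕ Fin (D - 1) :=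
  Sum.inr (Sum.inr ⟨n % (D - 1), Nat.mod_lt _ (by omega)⟩)

lemma barbellPathVertex_of_lt (hD : 2 ≤ D) {n : ℕ} (hn : n < D - 1) :
    barbellPathVertex (p := p) (q := q) hD n = Sum.inr (Sum.inr ⟨n, hn⟩) := by
  simp [barbellPathVertex, Nat.mod_eq_of_lt hn]

lemma dirichletEnergy_barbell (hD : 2 ≤ D) (f : Fin p ⊕ Fin q ⊕ Fin (D - 1) → ℝ) :
    dirichletEnergy (barbell p q D) f =
      ∑ i, (f (Sum.inl i) - f (barbellPathVertex hD 0)) ^ 2 +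
      ∑ j, (f (Sum.inr (Sum.inl j)) - f (barbellPathVertex hD (D - 2))) ^ 2 +
      ∑ n ∈ Finset.range (D - 2),
        (f (barbellPathVertex hD n) - f (barbellPathVertex hD (n + 1))) ^ 2 := by
  rw [barbell, dirichletEnergy_fromRel (by rintro (_ | _ | _) (_ | _ | _) <;> simp; omega)]
  simp only [Fintype.sum_sum_type]
  simp only [↓reduceIte, Finset.sum_const_zero, zero_add, ← barbellPathVertex_of_lt hD]
  simp only [Fin.sum_ite_val_eq, dite_eq_ite, if_pos (show 0 < D - 1 by omega),
    if_pos (show D - 2 < D - 1 by omega)]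
  rw [Fin.sum_univ_eq_sum_range (fun n => if n + 1 < D - 1 then
      (f (barbellPathVertex hD n) - f (barbellPathVertex hD (n + 1))) ^ 2 else 0),
    Finset.sum_range_ite_succ_lt, show D - 1 - 1 = D - 2 by omega, add_assoc]

def barbellLeaves (p q D : ℕ) : Finset (Fin p ⊕ Fin q ⊕ Fin (D - 1)) :=
  Finset.univ.disjSum (Finset.univ.disjSum ∅)

lemma sum_barbellLeaves (g : Fin p ⊕ Fin q ⊕ Fin (D - 1) → ℝ) :
    ∑ x ∈ barbellLeaves p q D, g x = ∑ i, g (Sum.inl i) + ∑ j, g (Sum.inr (Sum.inl j)) := by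
  simp [barbellLeaves, Finset.sum_disjSum]

lemma card_barbellLeaves : (barbellLeaves p q D).card = p + q := by
  simp [barbellLeaves]

lemma barbell_degree_inl (hD : 2 ≤ D) (i : Fin p) : (barbell p q D).degree (Sum.inl i) = 1 := by
  rw [SimpleGraph.degree_eq_one_iff_existsUnique_adj]
  refine ⟨barbellPathVertex hD 0, by simp [barbellPathVertex, barbell], ?_⟩
  rintro (_ | _ | w) h <;> simp [barbell] at h
  simp [barbellPathVertex_of_lt hD (show 0 < D - 1 by omega), Fin.ext_iff, h]

lemma barbell_degree_inr_inl (hD : 2 ≤ D) (j : Fin q) :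
    (barbell p q D).degree (Sum.inr (Sum.inl j)) = 1 := by
  rw [SimpleGraph.degree_eq_one_iff_existsUnique_adj]
  refine ⟨barbellPathVertex hD (D - 2), ?_, ?_⟩
  · simp [barbellPathVertex_of_lt hD (show D - 2 < D - 1 by omega), barbell]
  rintro (_ | _ | w) h <;> simp [barbell] at h
  simp [barbellPathVertex_of_lt hD (show D - 2 < D - 1 by omega), Fin.ext_iff, h]

lemma one_lt_barbell_degree_inr_inr (hp : 1 ≤ p) (hq : 1 ≤ q) (w : Fin (D - 1)) :
    1 < (barbell p q D).degree (Sum.inr (Sum.inr w)) := by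
  rw [← SimpleGraph.card_neighborFinset_eq_degree, Finset.one_lt_card]
  simp only [SimpleGraph.mem_neighborFinset]
  have := w.2
  refine ⟨if (w : ℕ) = 0 then Sum.inl ⟨0, hp⟩ else Sum.inr (Sum.inr ⟨w - 1, by omega⟩), ?_,
    if h : (w : ℕ) = D - 2 then Sum.inr (Sum.inl ⟨0, hq⟩) else Sum.inr (Sum.inr ⟨w + 1, by omega⟩),
    ?_, ?_⟩ <;> split_ifs <;> simp [barbell, Fin.ext_iff] <;> omega

lemma leavesFinset_barbell (hp : 1 ≤ p) (hq : 1 ≤ q) (hD : 2 ≤ D) :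
    leavesFinset (barbell p q D) = barbellLeaves p q D := by
  ext (i | j | w)
  · simp [leavesFinset, barbellLeaves, barbell_degree_inl hD]
  · simp [leavesFinset, barbellLeaves, barbell_degree_inr_inl hD]
  · simpa [leavesFinset, barbellLeaves] using (one_lt_barbell_degree_inr_inr hp hq w).ne'

lemma dirichletEnergy_barbell_of_path_eq_zero (hD : 2 ≤ D) {f : Fin p ⊕ Fin q ⊕ Fin (D - 1) → ℝ}
    (hf : ∀ w, f (Sum.inr (Sum.inr w)) = 0) :
    dirichletEnergy (barbell p q D) f = ∑ x ∈ barbellLeaves p q D, f x ^ 2 := by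
  simp [dirichletEnergy_barbell hD, sum_barbellLeaves, barbellPathVertex, hf]

theorem steklovEig_barbell_of_three_le (hD : 2 ≤ D) {k : ℕ} (hk3 : 3 ≤ k) (hk : k ≤ p + q) :
    steklovEig (barbell p q D) (barbellLeaves p q D) k = 1 := by
  obtain ⟨S, hSB, rfl⟩ := Finset.exists_subset_card_eq (card_barbellLeaves (D := D) ▸ hk)
  refine steklovEig_eq_of_mem_steklovBounds (ι := Fin 2) (by rw [Fintype.card_fin]; omega)
    ![Sum.elim 1 0, Sum.elim 0 (Sum.elim 1 0)] (fun f hf => ?_) ?_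
  · have hA : ∑ i, f (Sum.inl i) = 0 := by simpa [sum_barbellLeaves] using hf 0
    have hB : ∑ j, f (Sum.inr (Sum.inl j)) = 0 := by simpa [sum_barbellLeaves] using hf 1
    rw [dirichletEnergy_barbell hD, sum_barbellLeaves, Finset.sum_sub_sq_eq,
      Finset.sum_sub_sq_eq, hA, hB]
    have : 0 ≤ ∑ n ∈ Finset.range (D - 2),
        (f (barbellPathVertex hD n) - f (barbellPathVertex hD (n + 1))) ^ 2 :=
      Finset.sum_nonneg fun _ _ => sq_nonneg _
    simp only [Finset.card_univ, Fintype.card_fin]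
    nlinarith [sq_nonneg (f (barbellPathVertex hD 0)), sq_nonneg (f (barbellPathVertex hD (D - 2)))]
  · refine mem_steklovBounds_of_subset hSB fun f hf => ?_
    rw [one_mul, dirichletEnergy_barbell_of_path_eq_zero hD fun w => hf _ fun hw => ?_]
    simpa [barbellLeaves] using hSB hw

noncomputable def barbellWeight (p q D : ℕ) : ℝ := ((D : ℝ) - 2) * p * q + p + q

lemma barbellWeight_pos (hp : 1 ≤ p) (hD : 2 ≤ D) : 0 < barbellWeight p q D := by
  have : (0 : ℝ) ≤ (D : ℝ) - 2 := by rw [sub_nonneg]; exact_mod_cast hD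
  have : (1 : ℝ) ≤ p := by exact_mod_cast hp
  unfold barbellWeight
  positivity

/-- The harmonic extension of the boundary values `-q N` on the first star and `p N` on the
second, where `N = barbellWeight p q D`. -/
noncomputable def barbellEigenfunction (p q D : ℕ) : Fin p ⊕ Fin q ⊕ Fin (D - 1) → ℝ
  | Sum.inl _ => -(q * barbellWeight p q D)
  | Sum.inr (Sum.inl _) => p * barbellWeight p q D
  | Sum.inr (Sum.inr w) => -(q * barbellWeight p q D) + q * (p + q) * (1 + p * (w : ℕ))

lemma barbellEigenfunction_pathVertex (hD : 2 ≤ D) {n : ℕ} (hn : n < D - 1) :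
    barbellEigenfunction p q D (barbellPathVertex hD n) =
      -(q * barbellWeight p q D) + q * (p + q) * (1 + p * n) := by
  rw [barbellPathVertex_of_lt hD hn]
  rfl

lemma dirichletEnergy_barbellEigenfunction (hp : 1 ≤ p) (hD : 2 ≤ D) :
    dirichletEnergy (barbell p q D) (barbellEigenfunction p q D) =
      (p + q) / barbellWeight p q D *
        ∑ x ∈ barbellLeaves p q D, barbellEigenfunction p q D x ^ 2 := by
  have hN := (barbellWeight_pos (q := q) hp hD).ne'
  have hpath : ∀ n ∈ Finset.range (D - 2),
      (barbellEigenfunction p q D (barbellPathVertex hD n) -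
        barbellEigenfunction p q D (barbellPathVertex hD (n + 1))) ^ 2 =
      ((p : ℝ) * q * (p + q)) ^ 2 := fun n hn => by
    rw [Finset.mem_range] at hn
    rw [barbellEigenfunction_pathVertex hD (by omega),
      barbellEigenfunction_pathVertex hD (by omega)]
    push_cast
    ring
  rw [dirichletEnergy_barbell hD, Finset.sum_congr rfl hpath, sum_barbellLeaves,
    barbellEigenfunction_pathVertex hD (by omega), barbellEigenfunction_pathVertex hD (by omega)]
  simp only [barbellEigenfunction, Finset.sum_const, Finset.card_univ, Fintype.card_fin,
    Finset.card_range, nsmul_eq_mul, Nat.cast_sub hD]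
  field_simp
  unfold barbellWeight
  push_cast
  ring

lemma barbell_rayleigh_le (hp : 1 ≤ p) (hq : 1 ≤ q) (hD : 3 ≤ D)
    {f : Fin p ⊕ Fin q ⊕ Fin (D - 1) → ℝ} (hf : ∑ x ∈ barbellLeaves p q D, f x = 0) :
    (p + q) / barbellWeight p q D * ∑ x ∈ barbellLeaves p q D, f x ^ 2 ≤
      dirichletEnergy (barbell p q D) f := by
  have hD2 : 2 ≤ D := by omega
  set g : ℕ → ℝ := fun n => f (barbellPathVertex hD2 n)
  set A := ∑ i, f (Sum.inl i)
  have hBA : ∑ j, f (Sum.inr (Sum.inl j)) = -A := by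
    rw [sum_barbellLeaves] at hf
    linarith
  have hCSa : A ^ 2 ≤ p * ∑ i, f (Sum.inl i) ^ 2 := by
    simpa using sq_sum_le_card_mul_sum_sq (s := Finset.univ) (f := fun i => f (Sum.inl i))
  have hCSb : A ^ 2 ≤ q * ∑ j, f (Sum.inr (Sum.inl j)) ^ 2 := by
    simpa [hBA] using
      sq_sum_le_card_mul_sum_sq (s := Finset.univ) (f := fun j => f (Sum.inr (Sum.inl j)))
  have hCSP : (g 0 - g (D - 2)) ^ 2 ≤
      ((D : ℝ) - 2) * ∑ n ∈ Finset.range (D - 2), (g n - g (n + 1)) ^ 2 := by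
    have := sq_sum_le_card_mul_sum_sq (s := Finset.range (D - 2)) (f := fun n => g n - g (n + 1))
    rwa [Finset.sum_range_sub', Finset.card_range, Nat.cast_sub hD2, Nat.cast_ofNat] at this
  have hd : (0 : ℝ) < (D : ℝ) - 2 := by
    rw [sub_pos]; exact_mod_cast hD
  rw [div_mul_eq_mul_div, div_le_iff₀ (barbellWeight_pos hp hD2), dirichletEnergy_barbell hD2,
    sum_barbellLeaves, Finset.sum_sub_sq_eq, Finset.sum_sub_sq_eq, hBA, mul_comm]
  simp only [Finset.card_univ, Fintype.card_fin]
  have := barbell_energy_inequality (by positivity) (by positivity) hd hCSa hCSb hCSP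
  unfold barbellWeight
  linarith

theorem steklovEig_barbell_two (hp : 1 ≤ p) (hq : 1 ≤ q) (hD : 3 ≤ D) :
    steklovEig (barbell p q D) (barbellLeaves p q D) 2 = (p + q) / barbellWeight p q D := by
  have hD2 : 2 ≤ D := by omega
  have hN := barbellWeight_pos (q := q) hp hD2
  refine steklovEig_eq_of_mem_steklovBounds (ι := Fin 1) (by simp) (fun _ _ => 1)
    (fun f hf => barbell_rayleigh_le hp hq hD (by simpa using hf 0)) ?_
  refine mem_steklovBounds_two (by positivity) (Function.ne_iff.2 ⟨⟨Sum.inl ⟨0, hp⟩, ?_⟩, ?_⟩) ?_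
    (dirichletEnergy_barbellEigenfunction hp hD2)
  · simp [barbellLeaves]
  · simpa [barbellEigenfunction, hN.ne'] using (by omega : q ≠ 0)
  · simp only [barbellEigenfunction, sum_barbellLeaves, Finset.sum_neg_distrib, Finset.sum_const,
      Finset.card_univ, Fintype.card_fin, nsmul_eq_mul]
    ring

end Barbell

/-- Let `p, q ≥ 1` and `D ≥ 3` be integers, and let `T = B(p,q,D)` be the
barbell graph with leaves as boundary. Then the Steklov eigenvalues of `T` are `σ₁ = 0`,
`σ₂ = (p+q)/((D-2)pq + p + q)`, and `σₖ = 1` for all `3 ≤ k ≤ p+q`. -/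
theorem stmt11 (p q D : ℕ) (hp : 1 ≤ p) (hq : 1 ≤ q) (hD : 3 ≤ D) :
    steklovEig (barbell p q D) (leavesFinset (barbell p q D)) 1 = 0 ∧
    steklovEig (barbell p q D) (leavesFinset (barbell p q D)) 2 =
      ((p : ℝ) + q) / (((D : ℝ) - 2) * p * q + p + q) ∧
    ∀ k : ℕ, 3 ≤ k → k ≤ p + q →
      steklovEig (barbell p q D) (leavesFinset (barbell p q D)) k = 1 := by
  rw [leavesFinset_barbell hp hq (by omega)]
  exact ⟨steklovEig_one ⟨Sum.inl ⟨0, hp⟩, by simp [barbellLeaves]⟩,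
    steklovEig_barbell_two hp hq hD,
    fun k hk3 hk => steklovEig_barbell_of_three_le (by omega) hk3 hk⟩
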